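/- arXiv:1905.08049 — 2 statements merged into one kernel-verified Lean document; each statement's English description precedes it below -/
import Mathlib

section
/- Let φ_n : PB_n → G_n^3 be the homomorphism defined by φ_n(b_{ij}) = c_{i,i+1}^{-1} c_{i,i+2}^{-1} ⋯ c_{i,j-1}^{-1} c_{i,j}^2 c_{i,j-1} ⋯ c_{i,i+2} c_{i,i+1}, where c_{i,j} = (∏_{k>j,k≠i} a_{ijk})(∏_{k<j,k≠i} a_{ijk}). Then q_m ∘ φ_n = φ_{n-1} ∘ p_m for every m ∈ {1,…,n}, where p_m : PB_n → PB_{n-1} deletes the m-th strand and q_m : G_n^3 → G_{n-1}^3 kills generators containing index m and reindexes the rest. -/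
/-!
Both sides are homomorphisms out of `PB_{n+2}`, so it suffices to compare them on the band
generators `b_{ij}`. That the bands generate the pure braid group is the combing argument: the
subgroup `B` they generate is normal in the braid group (a band conjugated by `σ_k` is a product
of bands), and in any quotient where every `σ_k` squares to `1`, each braid becomes equal to the
combed lift of its permutation, which moves the strands into place one at a time by runs
`σ_j ⋯ σ_{t-1}`. Since `σ_k² = b_{k,k+1}`, this applies to the quotient by `B`, where a pure
braid thus becomes the lift of the identity, which is `1`.

On a band, `q_m` kills every `a_{ijk}`, and hence every `c_{ij}`, whose indices contain `m`, and
reindexes the others; so the product defining `φ_{n+2}(b_{ij})` becomes the one defining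
`φ_{n+1}(b_{i'j'})` for the reindexed strands, which is `φ_{n+1}(p_m(b_{ij}))`.
-/

/-- A three-element set `{x,y,z}` has cardinality 3. -/
lemma card3 {α : Type*} [DecidableEq α] {x y z : α}
    (hxy : x ≠ y) (hxz : x ≠ z) (hyz : y ≠ z) : ({x, y, z} : Finset α).card = 3 := by
  rw [Finset.card_insert_of_notMem (by simp [hxy, hxz]), Finset.card_pair hyz]

/-- Index type for the generators `a_{ijk}` of `G_n^3`: three-element subsets of `Fin n`. -/
abbrev TripIdx (n : ℕ) := {s : Finset (Fin n) // s.card = 3}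

/-- The unordered triple `{i,j,k}` as an index. -/
def mkTrip {n : ℕ} (i j k : Fin n) (hij : i ≠ j) (hik : i ≠ k) (hjk : j ≠ k) : TripIdx n :=
  ⟨{i, j, k}, card3 hij hik hjk⟩

/-- Relations of the group `G_n^3`: every generator is an involution, generators whose
index triples share at most one index commute, and the tetrahedron relation
`a_{ijk}a_{ijl}a_{ikl}a_{jkl} = a_{jkl}a_{ikl}a_{ijl}a_{ijk}` holds. -/
def gn3Rels (n : ℕ) : Set (FreeGroup (TripIdx n)) :=
  {r | (∃ s : TripIdx n, r = FreeGroup.of s * FreeGroup.of s) ∨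
       (∃ s t : TripIdx n, (s.1 ∩ t.1).card ≤ 1 ∧
          r = FreeGroup.of s * FreeGroup.of t * (FreeGroup.of s)⁻¹ * (FreeGroup.of t)⁻¹) ∨
       (∃ (i j k l : Fin n) (hij : i ≠ j) (hik : i ≠ k) (hil : i ≠ l)
          (hjk : j ≠ k) (hjl : j ≠ l) (hkl : k ≠ l),
          r = FreeGroup.of (mkTrip i j k hij hik hjk) * FreeGroup.of (mkTrip i j l hij hil hjl) *
              FreeGroup.of (mkTrip i k l hik hil hkl) * FreeGroup.of (mkTrip j k l hjk hjl hkl) *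
              (FreeGroup.of (mkTrip j k l hjk hjl hkl) * FreeGroup.of (mkTrip i k l hik hil hkl) *
               FreeGroup.of (mkTrip i j l hij hil hjl) *
               FreeGroup.of (mkTrip i j k hij hik hjk))⁻¹)}

/-- The group `G_n^3`. -/
abbrev Gn3 (n : ℕ) := PresentedGroup (gn3Rels n)

/-- The generator `a_{ijk}` of `G_n^3`, with `ℕ` indices (strands are numbered
`0,…,n-1`); junk value `1` if the indices are out of range or not distinct. -/
def a3 (n : ℕ) (i j k : ℕ) : Gn3 n :=
  if h : i < n ∧ j < n ∧ k < n ∧ i ≠ j ∧ i ≠ k ∧ j ≠ k then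
    PresentedGroup.of (mkTrip ⟨i, h.1⟩ ⟨j, h.2.1⟩ ⟨k, h.2.2.1⟩
      (by simp [Fin.ext_iff, h.2.2.2.1]) (by simp [Fin.ext_iff, h.2.2.2.2.1])
      (by simp [Fin.ext_iff, h.2.2.2.2.2]))
  else 1

/-- Index deletion: strand indices above `m` are shifted down by one. -/
def dl (m x : ℕ) : ℕ := if x < m then x else x - 1

/-- `qCond n m q` says that `q : G_{n+1}^3 → G_n^3` is the homomorphism `q_m`: it kills the
generators whose index triple contains `m` and reindexes the remaining ones. -/
def qCond (n m : ℕ) (q : Gn3 (n + 1) →* Gn3 n) : Prop :=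
  ∀ i j k : ℕ, i < n + 1 → j < n + 1 → k < n + 1 → i ≠ j → i ≠ k → j ≠ k →
    q (a3 (n + 1) i j k) =
      if i = m ∨ j = m ∨ k = m then 1 else a3 n (dl m i) (dl m j) (dl m k)

/-- The element `c_{i,j} = (∏_{k>j, k≠i} a_{ijk}) (∏_{k<j, k≠i} a_{ijk})` of `G_n^3`
(products taken in increasing order of `k`). -/
def cc (n : ℕ) (i j : ℕ) : Gn3 n :=
  ((((List.range n).filter (fun k => j < k)).map (fun k => a3 n i j k)).prod) *
  ((((List.range n).filter (fun k => k < j ∧ k ≠ i)).map (fun k => a3 n i j k)).prod)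

/-! ### The braid group on `n+1` strands and its pure braid subgroup -/

/-- Relations of the Artin braid group on `n+1` strands, with generators
`σ_0, …, σ_{n-1}`: far commutation and the braid relation. -/
def braidRels (n : ℕ) : Set (FreeGroup (Fin n)) :=
  {r | (∃ i j : Fin n, (i : ℕ) + 1 < (j : ℕ) ∧
          r = FreeGroup.of i * FreeGroup.of j * (FreeGroup.of i)⁻¹ * (FreeGroup.of j)⁻¹) ∨
       (∃ i j : Fin n, (i : ℕ) + 1 = (j : ℕ) ∧
          r = FreeGroup.of i * FreeGroup.of j * FreeGroup.of i *
              (FreeGroup.of j * FreeGroup.of i * FreeGroup.of j)⁻¹)}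

/-- The braid group on `n+1` strands. -/
abbrev Braid (n : ℕ) := PresentedGroup (braidRels n)

/-- The canonical projection from the braid group on `n+1` strands to the symmetric
group, sending `σ_i` to the transposition `(i, i+1)`. -/
def braidPerm (n : ℕ) : Braid n →* Equiv.Perm (Fin (n + 1)) :=
  PresentedGroup.toGroup (f := fun i => Equiv.swap i.castSucc i.succ) (by
    rintro r (⟨i, j, hij, rfl⟩ | ⟨i, j, hij, rfl⟩) <;>
      simp only [map_mul, map_inv, FreeGroup.lift_apply_of]
    · have hc : Commute (Equiv.swap i.castSucc i.succ) (Equiv.swap j.castSucc j.succ) := by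
        apply Equiv.Perm.Disjoint.commute
        intro x
        by_cases hx : x = j.castSucc ∨ x = j.succ
        · left
          rcases hx with rfl | rfl <;>
            exact Equiv.swap_apply_of_ne_of_ne
              (by simp only [ne_eq, Fin.ext_iff, Fin.coe_castSucc, Fin.val_succ]; omega)
              (by simp only [ne_eq, Fin.ext_iff, Fin.coe_castSucc, Fin.val_succ]; omega)
        · push_neg at hx
          right
          exact Equiv.swap_apply_of_ne_of_ne hx.1 hx.2
      rw [hc.eq]; group
    · have hb : j.castSucc = i.succ := by
        simp only [Fin.ext_iff, Fin.coe_castSucc, Fin.val_succ]; omega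
      rw [hb]
      have hab : (i.castSucc : Fin (n + 1)) ≠ i.succ := by
        simp [Fin.ext_iff]
      have hac : (i.castSucc : Fin (n + 1)) ≠ j.succ := by
        simp only [ne_eq, Fin.ext_iff, Fin.coe_castSucc, Fin.val_succ]; omega
      have hbc : (i.succ : Fin (n + 1)) ≠ j.succ := by
        simp only [ne_eq, Fin.ext_iff, Fin.val_succ]; omega
      have e1 := Equiv.swap_mul_swap_mul_swap hbc.symm hac.symm
      have e2 := Equiv.swap_mul_swap_mul_swap hab hac
      rw [Equiv.swap_comm i.succ i.castSucc, Equiv.swap_comm j.succ i.succ] at e1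
      have key : Equiv.swap i.castSucc i.succ * Equiv.swap i.succ j.succ *
          Equiv.swap i.castSucc i.succ =
          Equiv.swap i.succ j.succ * Equiv.swap i.castSucc i.succ *
          Equiv.swap i.succ j.succ := by
        rw [e1, e2, Equiv.swap_comm]
      rw [key]; group)

/-- The pure braid group on `n+1` strands: the kernel of the projection to the
symmetric group. -/
def PureBraid (n : ℕ) : Subgroup (Braid n) := (braidPerm n).ker

/-- The generator `σ_k` of the braid group on `n+1` strands (junk value `1` if `k` is out
of range). -/
def σB {n : ℕ} (k : ℕ) : Braid n := if h : k < n then PresentedGroup.of ⟨k, h⟩ else 1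

/-- The band generator `A_{ij} = (σ_{j-1} ⋯ σ_{i+1}) σ_i^2 (σ_{j-1} ⋯ σ_{i+1})⁻¹`
(`0`-indexed strands `i < j`) of the pure braid group on `n+1` strands. -/
def band (n : ℕ) (i j : ℕ) : Braid n :=
  (((List.range' (i + 1) (j - i - 1)).reverse).map (σB (n := n))).prod * σB i * σB i *
    ((((List.range' (i + 1) (j - i - 1)).reverse).map (σB (n := n))).prod)⁻¹

/-- Index deletion: strand indices above `m` are shifted down by one. -/
def dlB (m x : ℕ) : ℕ := if x < m then x else x - 1

/-- `pCond n m p` says that `p : PB_{n+2} → PB_{n+1}` (pure braid groups on `n+2` and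
`n+1` strands) is the strand-deletion homomorphism `p_m` deleting the `m`-th strand: on
band generators, `p_m(b_{ij}) = 1` if `m ∈ {i,j}` and otherwise `b_{ij}` with indices
above `m` shifted down by one. -/
def pCond (n m : ℕ) (p : PureBraid (n + 1) →* PureBraid n) : Prop :=
  ∀ i j : ℕ, i < j → j < n + 2 → ∀ x : PureBraid (n + 1),
    (x : Braid (n + 1)) = band (n + 1) i j →
      ((p x : PureBraid n) : Braid n) =
        if i = m ∨ j = m then 1 else band n (dlB m i) (dlB m j)

/-- The element `c_{i,i+1}^{-1} ⋯ c_{i,j-1}^{-1} c_{i,j}^2 c_{i,j-1} ⋯ c_{i,i+1}` of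
`G_n^3`, the image of the band generator `b_{ij}` under `φ`. -/
def phiW (n : ℕ) (i j : ℕ) : Gn3 n :=
  ((((List.range' (i + 1) (j - i - 1)).reverse).map (cc n i)).prod)⁻¹ * (cc n i j) ^ 2 *
    (((List.range' (i + 1) (j - i - 1)).reverse).map (cc n i)).prod

/-- `phiCond n φ` says that `φ : PB_{n+1} → G_{n+1}^3` (pure braids on `n+1` strands) is
the homomorphism `φ_{n+1}`: it sends each band generator `b_{ij}` to
`c_{i,i+1}^{-1} ⋯ c_{i,j-1}^{-1} c_{i,j}^2 c_{i,j-1} ⋯ c_{i,i+1}`. -/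
def phiCond (n : ℕ) (φ : PureBraid n →* Gn3 (n + 1)) : Prop :=
  ∀ i j : ℕ, i < j → j < n + 1 → ∀ x : PureBraid n,
    (x : Braid n) = band n i j → φ x = phiW (n + 1) i j

open Equiv

lemma Commute.conj_of_semiconjBy {G : Type*} [Group G] {a b y x : G} (hy : a * y = y * b)
    (hx : Commute b x) : Commute a (y * x * y⁻¹) := by
  have hy' : b * y⁻¹ = y⁻¹ * a := by
    rw [eq_inv_mul_iff_mul_eq, ← mul_assoc, ← hy]; group
  calc a * (y * x * y⁻¹) = (a * y) * x * y⁻¹ := by group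
    _ = y * (b * x) * y⁻¹ := by rw [hy]; group
    _ = y * x * (b * y⁻¹) := by rw [hx.eq]; group
    _ = y * x * y⁻¹ * a := by rw [hy']; group

section BraidRelations

variable {n : ℕ}

lemma σB_eq_of (k : Fin n) : PresentedGroup.of (rels := braidRels n) k = σB k := by
  rw [σB, dif_pos k.isLt]

lemma σB_of_le {k : ℕ} (h : n ≤ k) : σB (n := n) k = 1 := dif_neg (by omega)

lemma σB_commute {k l : ℕ} (h : k + 2 ≤ l ∨ l + 2 ≤ k) : Commute (σB (n := n) k) (σB l) := by
  wlog hkl : k + 2 ≤ l generalizing k l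
  · exact (this h.symm (h.resolve_left hkl)).symm
  unfold σB
  split_ifs with hk hl
  · have := PresentedGroup.mk_eq_mk_of_mul_inv_mem (rels := braidRels n)
      (x := .of ⟨k, hk⟩ * .of ⟨l, hl⟩) (y := .of ⟨l, hl⟩ * .of ⟨k, hk⟩)
      (Or.inl ⟨⟨k, hk⟩, ⟨l, hl⟩, by simp only; omega, by group⟩)
    simp only [map_mul] at this
    exact this
  all_goals simp

lemma σB_braid {k : ℕ} (h : k + 1 < n) :
    σB (n := n) k * σB (k + 1) * σB k = σB (k + 1) * σB k * σB (k + 1) := by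
  rw [σB, σB, dif_pos (by omega), dif_pos h]
  have := PresentedGroup.mk_eq_mk_of_mul_inv_mem (rels := braidRels n)
    (x := .of ⟨k, by omega⟩ * .of ⟨k + 1, h⟩ * .of ⟨k, by omega⟩)
    (y := .of ⟨k + 1, h⟩ * .of ⟨k, by omega⟩ * .of ⟨k + 1, h⟩) (Or.inr ⟨_, _, rfl, rfl⟩)
  simp only [map_mul] at this
  exact this

end BraidRelations

section Bands

variable {n : ℕ}

lemma band_succ_self (k : ℕ) : band n k (k + 1) = σB k * σB k := by
  simp [band]

lemma band_succ_right {i j : ℕ} (hij : i < j) :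
    band n i (j + 1) = σB j * band n i j * (σB j)⁻¹ := by
  have hrun : List.range' (i + 1) (j + 1 - i - 1) = List.range' (i + 1) (j - i - 1) ++ [j] := by
    rw [show j + 1 - i - 1 = j - i - 1 + 1 by omega, List.range'_concat]
    congr 2
    omega
  simp only [band, hrun, List.reverse_append, List.reverse_singleton, List.map_append,
    List.map_cons, List.map_nil, List.prod_append, List.prod_cons, List.prod_nil]
  group

lemma band_succ_left {i j : ℕ} (hij : i + 1 < j) (hi : i + 1 < n) :
    band n (i + 1) j = σB i * band n i j * (σB i)⁻¹ := by
  induction j, hij using Nat.le_induction with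
  | base =>
    have hconj : (σB i * σB (i + 1)) * σB i * (σB i * σB (i + 1))⁻¹ = σB (n := n) (i + 1) := by
      rw [σB_braid hi]; group
    rw [band_succ_self, band_succ_right (by omega), band_succ_self]
    calc σB (i + 1) * σB (i + 1)
        = ((σB i * σB (i + 1)) * σB i * (σB i * σB (i + 1))⁻¹) *
            ((σB i * σB (i + 1)) * σB i * (σB i * σB (i + 1))⁻¹) := by rw [hconj]
      _ = σB i * (σB (i + 1) * (σB i * σB i) * (σB (i + 1))⁻¹) * (σB i)⁻¹ := by group
  | succ j hj ih =>
    rw [band_succ_right (by omega), band_succ_right (by omega), ih,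
      show σB j * (σB i * band n i j * (σB i)⁻¹) * (σB j)⁻¹ =
        (σB j * σB i) * band n i j * (σB j * σB i)⁻¹ by group,
      (σB_commute (n := n) (k := j) (l := i) (by omega)).eq]
    group

lemma commute_σB_band_of_far {i j k : ℕ} (hij : i < j) (h : k + 2 ≤ i ∨ j + 1 ≤ k) :
    Commute (σB (n := n) k) (band n i j) := by
  induction j, hij using Nat.le_induction with
  | base =>
    rw [band_succ_self]
    exact (σB_commute (by omega)).mul_right (σB_commute (by omega))
  | succ j hj ih =>
    have hkj : Commute (σB (n := n) k) (σB j) := σB_commute (by omega)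
    rw [band_succ_right (by omega)]
    exact ((hkj.mul_right (ih (by omega))).mul_right hkj.inv_right)

lemma commute_σB_band_of_between {i j k : ℕ} (hik : i + 1 ≤ k) (hkj : k + 2 ≤ j)
    (hk : k + 1 < n) : Commute (σB (n := n) k) (band n i j) := by
  induction j, hkj using Nat.le_induction with
  | base =>
    rw [show band n i (k + 2) = (σB (k + 1) * σB k) * band n i k * (σB (k + 1) * σB k)⁻¹ by
      rw [band_succ_right (by omega), band_succ_right (by omega)]; group]
    refine Commute.conj_of_semiconjBy (b := σB (k + 1)) ?_
      (commute_σB_band_of_far (by omega) (by omega))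
    rw [← mul_assoc, ← σB_braid hk]
  | succ j hj ih =>
    have hkj : Commute (σB (n := n) k) (σB j) := σB_commute (by omega)
    rw [band_succ_right (by omega)]
    exact ((hkj.mul_right ih).mul_right hkj.inv_right)

def bandSubgroup (n : ℕ) : Subgroup (Braid n) :=
  Subgroup.closure {g | ∃ i j, i < j ∧ j ≤ n ∧ g = band n i j}

lemma band_mem_bandSubgroup {i j : ℕ} (hij : i < j) (hj : j ≤ n) :
    band n i j ∈ bandSubgroup n :=
  Subgroup.subset_closure ⟨i, j, hij, hj, rfl⟩

lemma σB_conj_band_mem {i j : ℕ} (hij : i < j) (hj : j ≤ n) (k : ℕ) :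
    σB k * band n i j * (σB k)⁻¹ ∈ bandSubgroup n := by
  by_cases hkn : n ≤ k
  · simpa [σB_of_le hkn] using band_mem_bandSubgroup hij hj
  -- conjugating by `σ_k` twice is conjugating by the band `b_{k,k+1}`
  have twice : ∀ {x}, x ∈ bandSubgroup n →
      σB k * (σB k * x * (σB k)⁻¹) * (σB k)⁻¹ ∈ bandSubgroup n := fun {x} hx => by
    have hb := band_mem_bandSubgroup (n := n) (Nat.lt_succ_self k) (by omega)
    rw [band_succ_self] at hb
    convert mul_mem (mul_mem hb hx) (inv_mem hb) using 1
    group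
  rcases show k + 2 ≤ i ∨ j + 1 ≤ k ∨ k + 1 = i ∨ (k = i ∧ j = i + 1) ∨ (k = i ∧ i + 1 < j) ∨
      (i < k ∧ k + 2 ≤ j) ∨ (i < k ∧ k + 1 = j) ∨ k = j by omega with
    h | h | h | ⟨rfl, rfl⟩ | ⟨rfl, h⟩ | ⟨h, h'⟩ | ⟨h, rfl⟩ | rfl
  · rw [(commute_σB_band_of_far hij (.inl h)).eq, mul_inv_cancel_right]
    exact band_mem_bandSubgroup hij hj
  · rw [(commute_σB_band_of_far hij (.inr h)).eq, mul_inv_cancel_right]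
    exact band_mem_bandSubgroup hij hj
  · subst h
    rw [band_succ_left hij (by omega)]
    exact twice (band_mem_bandSubgroup (by omega) hj)
  · convert band_mem_bandSubgroup hij hj using 1
    rw [band_succ_self]; group
  · rw [← band_succ_left h (by omega)]
    exact band_mem_bandSubgroup (by omega) hj
  · rw [(commute_σB_band_of_between h h' (by omega)).eq, mul_inv_cancel_right]
    exact band_mem_bandSubgroup hij hj
  · rw [band_succ_right h]
    exact twice (band_mem_bandSubgroup h (by omega))
  · rw [← band_succ_right hij]
    exact band_mem_bandSubgroup (by omega) (by omega)

lemma conj_mem_bandSubgroup {g : Braid n}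
    (hg : ∀ i j, i < j → j ≤ n → g * band n i j * g⁻¹ ∈ bandSubgroup n) {x : Braid n}
    (hx : x ∈ bandSubgroup n) : g * x * g⁻¹ ∈ bandSubgroup n := by
  have hle : bandSubgroup n ≤ (bandSubgroup n).comap (MulAut.conj g).toMonoidHom :=
    (Subgroup.closure_le _).mpr (by rintro _ ⟨i, j, hij, hj, rfl⟩; exact hg i j hij hj)
  exact hle hx

lemma bandSubgroup_normal (n : ℕ) : (bandSubgroup n).Normal := by
  rw [← Subgroup.normalizer_eq_top_iff, eq_top_iff]
  intro g _
  refine PresentedGroup.generated_by _ _ (fun k => ?_) g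
  rw [σB_eq_of, Subgroup.mem_normalizer_iff]
  have hb := band_mem_bandSubgroup (n := n) (Nat.lt_succ_self k) k.isLt
  rw [band_succ_self] at hb
  have hinv : ∀ i j, i < j → j ≤ n →
      (σB k)⁻¹ * band n i j * (σB k)⁻¹⁻¹ ∈ bandSubgroup n := fun i j hij hj => by
    convert mul_mem (mul_mem (inv_mem hb) (σB_conj_band_mem hij hj k)) hb using 1
    group
  refine fun x =>
    ⟨conj_mem_bandSubgroup fun _ _ hij hj => σB_conj_band_mem hij hj k, fun hx => ?_⟩
  convert conj_mem_bandSubgroup hinv hx using 1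
  group

end Bands

section Combing

variable {n : ℕ}

def ascRun (n j t : ℕ) : Braid n := ((List.range' j (t - j)).map σB).prod

lemma ascRun_of_le {j t : ℕ} (h : t ≤ j) : ascRun n j t = 1 := by
  simp [ascRun, Nat.sub_eq_zero_of_le h]

lemma ascRun_eq_σB_mul {j t : ℕ} (h : j < t) : ascRun n j t = σB j * ascRun n (j + 1) t := by
  rw [ascRun, ascRun, show t - j = t - (j + 1) + 1 by omega, List.range'_succ]
  simp

lemma commute_σB_ascRun {k j t : ℕ} (h : k + 2 ≤ j) : Commute (σB (n := n) k) (ascRun n j t) :=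
  Commute.list_prod_right _ _ fun x hx => by
    obtain ⟨s, hs, rfl⟩ := List.mem_map.mp hx
    exact σB_commute (.inl (by simp [List.mem_range'_1] at hs; omega))

lemma σB_mul_ascRun {j k t : ℕ} (hjk : j < k) (hkt : k < t) (hk : k < n) :
    σB k * ascRun n j t = ascRun n j t * σB (k - 1) := by
  obtain ⟨d, rfl⟩ : ∃ d, k = j + 1 + d := ⟨k - j - 1, by omega⟩
  induction d generalizing j with
  | zero =>
    rw [ascRun_eq_σB_mul (by omega), ascRun_eq_σB_mul (by omega), Nat.add_zero,
      Nat.add_sub_cancel, ← mul_assoc, ← mul_assoc, ← σB_braid (by omega)]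
    simp only [mul_assoc,
      (commute_σB_ascRun (n := n) (k := j) (j := j + 1 + 1) (t := t) le_rfl).eq]
  | succ d ih =>
    rw [show j + 1 + (d + 1) = j + 1 + 1 + d by omega, ascRun_eq_σB_mul (by omega), ← mul_assoc,
      (σB_commute (by omega)).eq, mul_assoc, ih (by omega) (by omega) (by omega), mul_assoc]

lemma braidPerm_σB {k : ℕ} (h : k < n) :
    braidPerm n (σB k) = swap ⟨k, by omega⟩ ⟨k + 1, by omega⟩ := by
  rw [σB, dif_pos h]
  exact PresentedGroup.toGroup.of _

lemma val_braidPerm_σB_apply {k : ℕ} (h : k < n) (x : Fin (n + 1)) :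
    (braidPerm n (σB k) x : ℕ) =
      if (x : ℕ) = k then k + 1 else if (x : ℕ) = k + 1 then k else x := by
  rw [braidPerm_σB h, swap_apply_def]
  split_ifs <;> simp_all [Fin.ext_iff]

lemma braidPerm_σB_mul_self (k : ℕ) : braidPerm n (σB k) * braidPerm n (σB k) = 1 := by
  by_cases h : k < n
  · rw [braidPerm_σB h, swap_mul_self]
  · rw [σB_of_le (by omega), map_one, mul_one]

lemma braidPerm_ascRun_apply_of_lt {j t : ℕ} (x : Fin (n + 1)) (hx : t < x) :
    braidPerm n (ascRun n j t) x = x := by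
  obtain ⟨d, hd⟩ : ∃ d, t - j = d := ⟨_, rfl⟩
  induction d generalizing j with
  | zero => rw [ascRun_of_le (by omega), map_one, Perm.one_apply]
  | succ d ih =>
    rw [ascRun_eq_σB_mul (by omega), map_mul, Perm.mul_apply, ih (by omega), Fin.ext_iff,
      val_braidPerm_σB_apply (by omega), if_neg (by omega), if_neg (by omega)]

lemma braidPerm_ascRun_apply_self {j t : ℕ} (hjt : j ≤ t) (ht : t ≤ n) :
    braidPerm n (ascRun n j t) ⟨t, by omega⟩ = ⟨j, by omega⟩ := by
  obtain ⟨d, hd⟩ : ∃ d, t - j = d := ⟨_, rfl⟩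
  induction d generalizing j with
  | zero =>
    rw [ascRun_of_le (by omega), map_one, Perm.one_apply, Fin.mk.injEq]
    omega
  | succ d ih =>
    rw [ascRun_eq_σB_mul (by omega), map_mul, Perm.mul_apply, ih (by omega) (by omega),
      Fin.ext_iff, val_braidPerm_σB_apply (by omega)]
    simp

lemma Fin.ofNat_eq_mk {t : ℕ} (h : t < n + 1) : Fin.ofNat (n + 1) t = ⟨t, h⟩ :=
  Fin.ext (Nat.mod_eq_of_lt h)

def FixesFrom (t : ℕ) (π : Perm (Fin (n + 1))) : Prop := ∀ x : Fin (n + 1), t ≤ x → π x = x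

/-- The combed lift of a permutation `π` fixing every point `≥ t`: the run `σ_{π t} ⋯ σ_{t-1}`
brings strand `t` to `π t`, and the remaining strands are combed recursively. -/
def canonBraid (n : ℕ) : ℕ → Perm (Fin (n + 1)) → Braid n
  | 0, _ => 1
  | t + 1, π =>
    let j : ℕ := π (Fin.ofNat (n + 1) t)
    ascRun n j t * canonBraid n t ((braidPerm n (ascRun n j t))⁻¹ * π)

lemma canonBraid_succ {t j : ℕ} {π : Perm (Fin (n + 1))}
    (hj : (π (Fin.ofNat (n + 1) t) : ℕ) = j) :
    canonBraid n (t + 1) π =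
      ascRun n j t * canonBraid n t ((braidPerm n (ascRun n j t))⁻¹ * π) := by
  subst hj; rfl

lemma canonBraid_one {t : ℕ} (ht : t ≤ n + 1) : canonBraid n t 1 = 1 := by
  induction t with
  | zero => rfl
  | succ t ih =>
    rw [canonBraid_succ (j := t) (by rw [Perm.one_apply, Fin.ofNat_eq_mk (by omega)]),
      ascRun_of_le le_rfl, map_one, inv_one, one_mul, one_mul, ih (by omega)]

lemma val_apply_ofNat_le {t : ℕ} {π : Perm (Fin (n + 1))} (ht : t ≤ n)
    (hπ : FixesFrom (t + 1) π) : (π (Fin.ofNat (n + 1) t) : ℕ) ≤ t := by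
  by_contra! hlt
  have hfix := hπ _ hlt
  rw [π.injective hfix, Fin.ofNat_eq_mk (by omega)] at hlt
  exact lt_irrefl _ hlt

lemma FixesFrom.inv_ascRun_mul {t j : ℕ} {π : Perm (Fin (n + 1))} (ht : t ≤ n)
    (hπ : FixesFrom (t + 1) π) (hj : (π (Fin.ofNat (n + 1) t) : ℕ) = j) :
    FixesFrom t ((braidPerm n (ascRun n j t))⁻¹ * π) := by
  have hjt : j ≤ t := hj ▸ val_apply_ofNat_le ht hπ
  intro x hx
  rw [Perm.mul_apply, Perm.inv_eq_iff_eq]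
  rcases hx.eq_or_lt with h | h
  · rw [show x = ⟨t, by omega⟩ from Fin.ext h.symm, braidPerm_ascRun_apply_self hjt ht,
      Fin.ext_iff, ← Fin.ofNat_eq_mk (by omega)]
    exact hj
  · rw [hπ x h, braidPerm_ascRun_apply_of_lt x h]

lemma σB_mul_canonBraid_succ_of_eq_succ {t k : ℕ} {π : Perm (Fin (n + 1))} (hkt : k < t)
    (hj : (π (Fin.ofNat (n + 1) t) : ℕ) = k + 1) :
    σB k * canonBraid n (t + 1) π = canonBraid n (t + 1) (braidPerm n (σB k) * π) := by
  have hj' : ((braidPerm n (σB k) * π) (Fin.ofNat (n + 1) t) : ℕ) = k := by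
    rw [Perm.mul_apply, val_braidPerm_σB_apply (by omega), hj]
    simp
  rw [canonBraid_succ hj, canonBraid_succ hj', ascRun_eq_σB_mul hkt, map_mul, mul_inv_rev,
    mul_assoc _ (braidPerm n (σB k))⁻¹, inv_mul_cancel_left, mul_assoc]

variable {G : Type*} [Group G] (f : Braid n →* G)

lemma map_σB_mul_map_canonBraid_succ_of_mul_eq {t j k k' : ℕ} {π : Perm (Fin (n + 1))}
    (hk : k < n) (hjk : j ≠ k ∧ j ≠ k + 1) (hj : (π (Fin.ofNat (n + 1) t) : ℕ) = j)
    (hrun : σB k * ascRun n j t = ascRun n j t * σB k')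
    (hrest : f (σB k') * f (canonBraid n t ((braidPerm n (ascRun n j t))⁻¹ * π)) =
      f (canonBraid n t (braidPerm n (σB k') * ((braidPerm n (ascRun n j t))⁻¹ * π)))) :
    f (σB k) * f (canonBraid n (t + 1) π) =
      f (canonBraid n (t + 1) (braidPerm n (σB k) * π)) := by
  have hj' : ((braidPerm n (σB k) * π) (Fin.ofNat (n + 1) t) : ℕ) = j := by
    rw [Perm.mul_apply, val_braidPerm_σB_apply hk, hj, if_neg hjk.1, if_neg hjk.2]
  have hperm : (braidPerm n (ascRun n j t))⁻¹ * (braidPerm n (σB k) * π) =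
      braidPerm n (σB k') * ((braidPerm n (ascRun n j t))⁻¹ * π) := by
    have hrunP := congrArg (braidPerm n) hrun
    rw [map_mul, map_mul] at hrunP
    rw [← mul_assoc, ← mul_assoc]
    congr 1
    rw [inv_mul_eq_iff_eq_mul, ← mul_assoc, ← hrunP, mul_inv_cancel_right]
  rw [canonBraid_succ hj, canonBraid_succ hj', hperm, map_mul, map_mul, ← hrest, ← mul_assoc,
    ← map_mul, hrun, map_mul, mul_assoc]

lemma map_σB_mul_map_canonBraid (hf : ∀ k < n, f (σB k) ^ 2 = 1) {t : ℕ} (ht : t ≤ n + 1)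
    {π : Perm (Fin (n + 1))} (hπ : FixesFrom t π) {k : ℕ} (hk : k + 2 ≤ t) :
    f (σB k) * f (canonBraid n t π) = f (canonBraid n t (braidPerm n (σB k) * π)) := by
  induction t generalizing π k with
  | zero => omega
  | succ t ih =>
    obtain ⟨j, hj⟩ : ∃ j, (π (Fin.ofNat (n + 1) t) : ℕ) = j := ⟨_, rfl⟩
    have hjt : j ≤ t := hj ▸ val_apply_ofNat_le (by omega) hπ
    have hπ' := hπ.inv_ascRun_mul (by omega) hj
    rcases show k + 2 ≤ j ∨ (j < k ∧ k < t) ∨ j = k + 1 ∨ j = k by omega with h | h | h | h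
    · exact map_σB_mul_map_canonBraid_succ_of_mul_eq f (by omega) (by omega) hj
        (commute_σB_ascRun h).eq (ih (by omega) hπ' (by omega))
    · exact map_σB_mul_map_canonBraid_succ_of_mul_eq f (by omega) (by omega) hj
        (σB_mul_ascRun h.1 h.2 (by omega)) (ih (by omega) hπ' (by omega))
    · rw [← map_mul, σB_mul_canonBraid_succ_of_eq_succ (by omega) (hj.trans h)]
    · -- the previous case, applied to `σ_k π`, which sends `t` to `k + 1`
      have h₂ : ((braidPerm n (σB k) * π) (Fin.ofNat (n + 1) t) : ℕ) = k + 1 := by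
        rw [Perm.mul_apply, val_braidPerm_σB_apply (by omega), hj, if_pos h]
      have hπ₂ := σB_mul_canonBraid_succ_of_eq_succ (by omega) h₂
      rw [← mul_assoc, braidPerm_σB_mul_self, one_mul] at hπ₂
      rw [← hπ₂, map_mul, ← mul_assoc, ← sq, hf k (by omega), one_mul]

theorem ker_braidPerm_le_ker (hf : ∀ k < n, f (σB k) ^ 2 = 1) : (braidPerm n).ker ≤ f.ker := by
  let H : Subgroup (Braid n) :=
    { carrier := {g | ∀ π, f g * f (canonBraid n (n + 1) π) =
        f (canonBraid n (n + 1) (braidPerm n g * π))}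
      one_mem' := fun π => by simp
      mul_mem' := fun {a b} ha hb π => by
        simp only [map_mul, mul_assoc] at ha hb ⊢
        rw [hb, ha]
      inv_mem' := fun {a} ha π => by
        simp only [map_inv] at ha ⊢
        rw [inv_mul_eq_iff_eq_mul, ha, mul_inv_cancel_left] }
  have hH : ∀ g, g ∈ H := PresentedGroup.generated_by _ H fun k π => by
    rw [σB_eq_of]
    exact map_σB_mul_map_canonBraid f hf le_rfl (fun x hx => absurd x.isLt (by omega))
      (by omega)
  intro g hg
  have := hH g 1
  rw [MonoidHom.mem_ker] at hg ⊢
  rwa [hg, mul_one, canonBraid_one le_rfl, map_one, mul_one] at this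

end Combing

lemma pureBraid_le_bandSubgroup (n : ℕ) : PureBraid n ≤ bandSubgroup n := by
  have := bandSubgroup_normal n
  have hsq : ∀ k < n, QuotientGroup.mk' (bandSubgroup n) (σB k) ^ 2 = 1 := fun k hk => by
    rw [← map_pow, sq, ← band_succ_self, QuotientGroup.mk'_apply, QuotientGroup.eq_one_iff]
    exact band_mem_bandSubgroup (Nat.lt_succ_self k) hk
  have hker := ker_braidPerm_le_ker _ hsq
  rwa [QuotientGroup.ker_mk'] at hker

lemma band_mem_pureBraid (n i j : ℕ) : band n i j ∈ PureBraid n := by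
  rw [PureBraid, MonoidHom.mem_ker, band, map_mul, map_mul, map_mul, mul_assoc (braidPerm n _),
    braidPerm_σB_mul_self, mul_one, map_inv, mul_inv_cancel]

lemma PureBraid.hom_ext {n : ℕ} {G : Type*} [Group G] {φ ψ : PureBraid n →* G}
    (h : ∀ i j, i < j → j ≤ n → ∀ x : PureBraid n, (x : Braid n) = band n i j → φ x = ψ x) :
    φ = ψ := by
  have hle : bandSubgroup n ≤ (MonoidHom.eqLocus φ ψ).map (PureBraid n).subtype := by
    refine (Subgroup.closure_le _).mpr ?_
    rintro _ ⟨i, j, hij, hj, rfl⟩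
    exact ⟨⟨_, band_mem_pureBraid n i j⟩, h i j hij hj _ rfl, rfl⟩
  ext x
  obtain ⟨y, hy, hyx⟩ := hle (pureBraid_le_bandSubgroup n x.2)
  rw [← Subtype.ext hyx]
  exact hy

section Deletion

def natSuccAbove (m k : ℕ) : ℕ := if k < m then k else k + 1

lemma dl_natSuccAbove (m k : ℕ) : dl m (natSuccAbove m k) = k := by
  unfold dl natSuccAbove; split_ifs <;> omega

lemma natSuccAbove_dl {m x : ℕ} (h : x ≠ m) : natSuccAbove m (dl m x) = x := by
  unfold dl natSuccAbove; split_ifs <;> omega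

lemma natSuccAbove_ne (m k : ℕ) : natSuccAbove m k ≠ m := by
  unfold natSuccAbove; split_ifs <;> omega

lemma natSuccAbove_lt_natSuccAbove_iff {m a b : ℕ} :
    natSuccAbove m a < natSuccAbove m b ↔ a < b := by
  unfold natSuccAbove; split_ifs <;> omega

lemma natSuccAbove_inj {m a b : ℕ} : natSuccAbove m a = natSuccAbove m b ↔ a = b := by
  unfold natSuccAbove; split_ifs <;> omega

lemma natSuccAbove_lt_succ_iff {m N k : ℕ} (hm : m ≤ N) : natSuccAbove m k < N + 1 ↔ k < N := by
  unfold natSuccAbove; split_ifs <;> omega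

lemma filter_range_succ_ne {m N : ℕ} (hm : m ≤ N) :
    (List.range (N + 1)).filter (· ≠ m) = (List.range N).map (natSuccAbove m) := by
  refine List.Pairwise.eq_of_mem_iff (r := (· < ·)) (List.pairwise_lt_range.filter _)
    (List.pairwise_map.mpr (List.pairwise_lt_range.imp natSuccAbove_lt_natSuccAbove_iff.mpr))
    fun k => ?_
  simp only [List.mem_filter, List.mem_range, List.mem_map, ne_eq, decide_eq_true_eq]
  refine ⟨fun ⟨hk, hkm⟩ => ⟨dl m k, ?_, natSuccAbove_dl hkm⟩, ?_⟩
  · unfold dl; split_ifs <;> omega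
  · rintro ⟨a, ha, rfl⟩
    exact ⟨(natSuccAbove_lt_succ_iff hm).mpr ha, natSuccAbove_ne m a⟩

lemma range'_eq_filter_range {i j N : ℕ} (hj : j ≤ N) :
    List.range' (i + 1) (j - i - 1) = (List.range N).filter (fun k => i < k ∧ k < j) := by
  refine List.Pairwise.eq_of_mem_iff (r := (· < ·)) (List.pairwise_lt_range' ..)
    (List.pairwise_lt_range.filter _) fun k => ?_
  simp only [List.mem_range'_1, List.mem_filter, List.mem_range, decide_eq_true_eq]
  omega

lemma prod_map_filter_ne {M α : Type*} [Monoid M] [DecidableEq α] (l : List α) {f : α → M}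
    {a : α} (ha : f a = 1) : ((l.filter (· ≠ a)).map f).prod = (l.map f).prod := by
  induction l with
  | nil => rfl
  | cons b l ih =>
    by_cases h : b = a
    · rw [List.filter_cons_of_neg (by simpa using h), ih, List.map_cons, List.prod_cons, h, ha,
        one_mul]
    · rw [List.filter_cons_of_pos (by simpa using h), List.map_cons, List.prod_cons, ih,
        List.map_cons, List.prod_cons]

variable {M : Type*} [Monoid M] {m N : ℕ} {f : ℕ → M}

lemma filter_filter_range_succ_ne (hm : m ≤ N) (P : ℕ → Bool) :
    ((List.range (N + 1)).filter P).filter (· ≠ m) =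
      ((List.range N).filter (P ∘ natSuccAbove m)).map (natSuccAbove m) := by
  rw [List.filter_filter, ← List.filter_map, ← filter_range_succ_ne hm, List.filter_filter]
  simp only [Bool.and_comm]

lemma prod_map_filter_range_succ (hm : m ≤ N) (hf : f m = 1) (P : ℕ → Bool) :
    (((List.range (N + 1)).filter P).map f).prod =
      (((List.range N).filter (P ∘ natSuccAbove m)).map (f ∘ natSuccAbove m)).prod := by
  rw [← prod_map_filter_ne _ hf, filter_filter_range_succ_ne hm, List.map_map]

lemma prod_map_reverse_filter_range_succ (hm : m ≤ N) (hf : f m = 1) (P : ℕ → Bool) :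
    (((List.range (N + 1)).filter P).reverse.map f).prod =
      (((List.range N).filter (P ∘ natSuccAbove m)).reverse.map (f ∘ natSuccAbove m)).prod := by
  rw [← prod_map_filter_ne _ hf, List.filter_reverse, filter_filter_range_succ_ne hm,
    ← List.map_reverse, List.map_map]

end Deletion

section Projection

variable {n m : ℕ} {q : Gn3 (n + 2) →* Gn3 (n + 1)}

lemma q_a3_of_mem (hq : qCond (n + 1) m q) {i j k : ℕ} (h : i = m ∨ j = m ∨ k = m) :
    q (a3 (n + 2) i j k) = 1 := by
  by_cases hv : i < n + 2 ∧ j < n + 2 ∧ k < n + 2 ∧ i ≠ j ∧ i ≠ k ∧ j ≠ k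
  · obtain ⟨hi, hj, hk, hij, hik, hjk⟩ := hv
    rw [hq i j k hi hj hk hij hik hjk, if_pos h]
  · rw [a3, dif_neg hv, map_one]

lemma q_a3_natSuccAbove (hq : qCond (n + 1) m q) (hm : m < n + 2) (i j k : ℕ) :
    q (a3 (n + 2) (natSuccAbove m i) (natSuccAbove m j) (natSuccAbove m k)) = a3 (n + 1) i j k := by
  have hlt := fun x => natSuccAbove_lt_succ_iff (m := m) (N := n + 1) (k := x) (by omega)
  have hne := fun x y => (natSuccAbove_inj (m := m) (a := x) (b := y)).not
  by_cases hv : i < n + 1 ∧ j < n + 1 ∧ k < n + 1 ∧ i ≠ j ∧ i ≠ k ∧ j ≠ k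
  · obtain ⟨hi, hj, hk, hij, hik, hjk⟩ := hv
    rw [hq _ _ _ ((hlt i).mpr hi) ((hlt j).mpr hj) ((hlt k).mpr hk) ((hne i j).mpr hij)
      ((hne i k).mpr hik) ((hne j k).mpr hjk), if_neg (by simp [natSuccAbove_ne]),
      dl_natSuccAbove, dl_natSuccAbove, dl_natSuccAbove]
  · rw [a3, dif_neg (by simpa only [hlt, ne_eq, natSuccAbove_inj] using hv), map_one, a3,
      dif_neg hv]

lemma q_cc_of_mem (hq : qCond (n + 1) m q) {i j : ℕ} (h : i = m ∨ j = m) :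
    q (cc (n + 2) i j) = 1 := by
  rw [cc, map_mul, map_list_prod, map_list_prod, List.prod_eq_one, List.prod_eq_one, one_mul]
  all_goals
    simp only [List.map_map, List.mem_map]
    rintro _ ⟨k, -, rfl⟩
    exact q_a3_of_mem hq (by tauto)

lemma q_cc_natSuccAbove (hq : qCond (n + 1) m q) (hm : m < n + 2) (i j : ℕ) :
    q (cc (n + 2) (natSuccAbove m i) (natSuccAbove m j)) = cc (n + 1) i j := by
  rw [cc, cc, map_mul, map_list_prod, map_list_prod, List.map_map, List.map_map,
    prod_map_filter_range_succ (m := m) (N := n + 1) (by omega) (q_a3_of_mem hq (by simp)),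
    prod_map_filter_range_succ (m := m) (N := n + 1) (by omega) (q_a3_of_mem hq (by simp))]
  simp only [Function.comp_def, q_a3_natSuccAbove hq hm, natSuccAbove_lt_natSuccAbove_iff,
    ne_eq, natSuccAbove_inj]

def ccRun (N i j : ℕ) : Gn3 N :=
  (((List.range N).filter (fun k => i < k ∧ k < j)).reverse.map (cc N i)).prod

lemma phiW_eq_ccRun {N i j : ℕ} (hj : j ≤ N) :
    phiW N i j = (ccRun N i j)⁻¹ * cc N i j ^ 2 * ccRun N i j := by
  rw [phiW, ccRun, range'_eq_filter_range hj]

lemma q_ccRun_natSuccAbove (hq : qCond (n + 1) m q) (hm : m < n + 2) (i j : ℕ) :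
    q (ccRun (n + 2) (natSuccAbove m i) (natSuccAbove m j)) = ccRun (n + 1) i j := by
  rw [ccRun, ccRun, map_list_prod, List.map_map, prod_map_reverse_filter_range_succ (m := m)
    (N := n + 1) (by omega) (q_cc_of_mem hq (.inr rfl))]
  simp only [Function.comp_def, q_cc_natSuccAbove hq hm, natSuccAbove_lt_natSuccAbove_iff]

lemma q_phiW_of_mem (hq : qCond (n + 1) m q) {i j : ℕ} (h : i = m ∨ j = m) :
    q (phiW (n + 2) i j) = 1 := by
  rw [phiW, map_mul, map_mul, map_inv, map_pow, q_cc_of_mem hq h]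
  group

lemma q_phiW_natSuccAbove (hq : qCond (n + 1) m q) (hm : m < n + 2) {i j : ℕ}
    (hj : j < n + 1) :
    q (phiW (n + 2) (natSuccAbove m i) (natSuccAbove m j)) = phiW (n + 1) i j := by
  have hj' := (natSuccAbove_lt_succ_iff (m := m) (N := n + 1) (k := j) (by omega)).mpr hj
  rw [phiW_eq_ccRun hj'.le, phiW_eq_ccRun hj.le, map_mul, map_mul, map_inv, map_pow,
    q_ccRun_natSuccAbove hq hm, q_cc_natSuccAbove hq hm]

end Projection

/-- `q_m ∘ φ_{n+2} = φ_{n+1} ∘ p_m` — the strand-deletion maps intertwine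
`φ` (here `PB_{n+2}`, pure braids on `n+2` strands, maps to `G_{n+2}^3`). -/
theorem stmt17 (n m : ℕ) (hm : m < n + 2)
    (φ₁ : PureBraid (n + 1) →* Gn3 (n + 2)) (φ₀ : PureBraid n →* Gn3 (n + 1))
    (p : PureBraid (n + 1) →* PureBraid n) (q : Gn3 (n + 2) →* Gn3 (n + 1))
    (hφ₁ : phiCond (n + 1) φ₁) (hφ₀ : phiCond n φ₀)
    (hp : pCond n m p) (hq : qCond (n + 1) m q) :
    q.comp φ₁ = φ₀.comp p := by
  refine PureBraid.hom_ext fun i j hij hj x hx => ?_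
  have hpx := hp i j hij (by omega) x hx
  rw [MonoidHom.comp_apply, MonoidHom.comp_apply, hφ₁ i j hij (by omega) x hx]
  by_cases hhit : i = m ∨ j = m
  · rw [if_pos hhit, OneMemClass.coe_eq_one] at hpx
    rw [q_phiW_of_mem hq hhit, hpx, map_one]
  · rw [if_neg hhit] at hpx
    rw [not_or] at hhit
    obtain ⟨i, rfl⟩ : ∃ i', i = natSuccAbove m i' := ⟨dl m i, (natSuccAbove_dl hhit.1).symm⟩
    obtain ⟨j, rfl⟩ : ∃ j', j = natSuccAbove m j' := ⟨dl m j, (natSuccAbove_dl hhit.2).symm⟩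
    have hj' : j < n + 1 :=
      (natSuccAbove_lt_succ_iff (m := m) (N := n + 1) (by omega)).mp (by omega)
    simp only [show dlB = dl from rfl, dl_natSuccAbove] at hpx
    rw [q_phiW_natSuccAbove hq hm hj',
      hφ₀ i j (natSuccAbove_lt_natSuccAbove_iff.mp hij) hj' _ hpx]
end

section
/- Fix i < j in {1,…,n}. For a word β in G_{n,P}^2, and for each occurrence c of a generator a_{ij}^ε in β and each k ∉ {i,j}, define i_c^P(k) ∈ Z/2 by N_{ik}^0 + N_{jk}^0 mod 2 if ε = 0, and N_{ik}^0 + N_{jk}^1 mod 2 if ε = 1, where N_{st}^δ counts occurrences of a_{st}^δ before c. Then the map w^P_{{i,j}} : G_{n,P}^2 → F_n^2 sending β to the product of the functions i_{c_1}^P ⋯ i_{c_m}^P over all occurrences of a_{ij}^ε in order is well-defined, where F_n^2 is the free product of copies of Z/2 indexed by functions {1,…,n} \ {i,j} → Z/2. -/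
/-!
Reading a word from left to right while keeping the parities `N` of the letters seen so far is
a transducer with state space `S = (letters → ℤ/2)`: the letter `c` outputs `i_c^P = e c N` and
moves the state to `N + δ c`. Such a transducer is the same thing as a map from the letters to
the regular wreath product `F_n^2 ≀ S`, `c ↦ (e c, δ c)`, and the value of a word is read off
the product of the images of its letters. So `w^P` is well defined as soon as these images
satisfy the relations of `G_{n,P}^2`. They are involutions because the generators of `F_n^2`
are. Letters on disjoint pairs commute because neither changes a parity read by the other. In a
triangle relation only the letter `a_{ij}^ε` on `{i, j}` has an output, and the other two
letters `a_{iu}^{εi}`, `a_{ju}^{εj}` change the parities `N_{iu}^0` and `N_{ju}^ε` read at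
`k = u` simultaneously or not at all, precisely because `ε + εi + εj = 0`.
-/

/-- Index type for the generators `a_{ij}`: two-element subsets of `Fin n`. -/
abbrev PairIdx (n : ℕ) := {s : Finset (Fin n) // s.card = 2}

/-- The unordered pair `{i,j}` as an index. -/
def mkPair {n : ℕ} (i j : Fin n) (h : i ≠ j) : PairIdx n := ⟨{i, j}, Finset.card_pair h⟩

/-- Relations of the group `G_n^2`. -/
def gn2Rels (n : ℕ) : Set (FreeGroup (PairIdx n)) :=
  {r | (∃ (i j : Fin n) (h : i ≠ j),
          r = FreeGroup.of (mkPair i j h) * FreeGroup.of (mkPair i j h)) ∨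
       (∃ (i j k l : Fin n) (hij : i ≠ j) (hkl : k ≠ l),
          i ≠ k ∧ i ≠ l ∧ j ≠ k ∧ j ≠ l ∧
          r = FreeGroup.of (mkPair i j hij) * FreeGroup.of (mkPair k l hkl) *
              (FreeGroup.of (mkPair i j hij))⁻¹ * (FreeGroup.of (mkPair k l hkl))⁻¹) ∨
       (∃ (i j k : Fin n) (hij : i ≠ j) (hik : i ≠ k) (hjk : j ≠ k),
          r = FreeGroup.of (mkPair i j hij) * FreeGroup.of (mkPair i k hik) *
              FreeGroup.of (mkPair j k hjk) *
              (FreeGroup.of (mkPair j k hjk) * FreeGroup.of (mkPair i k hik) *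
               FreeGroup.of (mkPair i j hij))⁻¹)}

/-- The group `G_n^2`. -/
abbrev Gn2 (n : ℕ) := PresentedGroup (gn2Rels n)

/-- The generator `a_{ij}` of `G_n^2`. -/
def A2 {n : ℕ} (i j : Fin n) (h : i ≠ j) : Gn2 n := PresentedGroup.of (mkPair i j h)

/-- Relations of the group `G_{n,P}^2` (`G_n^2` with parity). -/
def gnP2Rels (n : ℕ) : Set (FreeGroup (PairIdx n × ZMod 2)) :=
  {r | (∃ (i j : Fin n) (h : i ≠ j) (ε : ZMod 2),
          r = FreeGroup.of (mkPair i j h, ε) * FreeGroup.of (mkPair i j h, ε)) ∨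
       (∃ (i j k l : Fin n) (hij : i ≠ j) (hkl : k ≠ l) (ε₁ ε₂ : ZMod 2),
          i ≠ k ∧ i ≠ l ∧ j ≠ k ∧ j ≠ l ∧
          r = FreeGroup.of (mkPair i j hij, ε₁) * FreeGroup.of (mkPair k l hkl, ε₂) *
              (FreeGroup.of (mkPair i j hij, ε₁))⁻¹ * (FreeGroup.of (mkPair k l hkl, ε₂))⁻¹) ∨
       (∃ (i j k : Fin n) (hij : i ≠ j) (hik : i ≠ k) (hjk : j ≠ k)
          (εij εik εjk : ZMod 2), εij + εik + εjk = 0 ∧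
          r = FreeGroup.of (mkPair i j hij, εij) * FreeGroup.of (mkPair i k hik, εik) *
              FreeGroup.of (mkPair j k hjk, εjk) *
              (FreeGroup.of (mkPair j k hjk, εjk) * FreeGroup.of (mkPair i k hik, εik) *
               FreeGroup.of (mkPair i j hij, εij))⁻¹)}

/-- The group `G_{n,P}^2`. -/
abbrev GnP2 (n : ℕ) := PresentedGroup (gnP2Rels n)

/-- The generator `a_{ij}^ε` of `G_{n,P}^2`. -/
def AP {n : ℕ} (i j : Fin n) (h : i ≠ j) (ε : ZMod 2) : GnP2 n :=
  PresentedGroup.of (mkPair i j h, ε)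

/-- Alphabet of `G_{n,D}^2`: crossing generators `a_{ij}` and point generators `τ_i`. -/
abbrev DIdx (n : ℕ) := PairIdx n ⊕ Fin n

/-- Relations of the group `G_{n,D}^2` (`G_n^2` with points). -/
def gnD2Rels (n : ℕ) : Set (FreeGroup (DIdx n)) :=
  {r | (∃ (i j : Fin n) (h : i ≠ j),
          r = FreeGroup.of (Sum.inl (mkPair i j h) : DIdx n) *
              FreeGroup.of (Sum.inl (mkPair i j h) : DIdx n)) ∨
       (∃ (i j k l : Fin n) (hij : i ≠ j) (hkl : k ≠ l),
          i ≠ k ∧ i ≠ l ∧ j ≠ k ∧ j ≠ l ∧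
          r = FreeGroup.of (Sum.inl (mkPair i j hij) : DIdx n) *
              FreeGroup.of (Sum.inl (mkPair k l hkl) : DIdx n) *
              (FreeGroup.of (Sum.inl (mkPair i j hij) : DIdx n))⁻¹ *
              (FreeGroup.of (Sum.inl (mkPair k l hkl) : DIdx n))⁻¹) ∨
       (∃ (i j k : Fin n) (hij : i ≠ j) (hik : i ≠ k) (hjk : j ≠ k),
          r = FreeGroup.of (Sum.inl (mkPair i j hij) : DIdx n) *
              FreeGroup.of (Sum.inl (mkPair i k hik) : DIdx n) *
              FreeGroup.of (Sum.inl (mkPair j k hjk) : DIdx n) *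
              (FreeGroup.of (Sum.inl (mkPair j k hjk) : DIdx n) *
               FreeGroup.of (Sum.inl (mkPair i k hik) : DIdx n) *
               FreeGroup.of (Sum.inl (mkPair i j hij) : DIdx n))⁻¹) ∨
       (∃ i : Fin n,
          r = FreeGroup.of (Sum.inr i : DIdx n) * FreeGroup.of (Sum.inr i : DIdx n)) ∨
       (∃ i j : Fin n,
          r = FreeGroup.of (Sum.inr i : DIdx n) * FreeGroup.of (Sum.inr j : DIdx n) *
              (FreeGroup.of (Sum.inr i : DIdx n))⁻¹ * (FreeGroup.of (Sum.inr j : DIdx n))⁻¹) ∨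
       (∃ (i j : Fin n) (h : i ≠ j),
          r = FreeGroup.of (Sum.inr i : DIdx n) * FreeGroup.of (Sum.inr j : DIdx n) *
              FreeGroup.of (Sum.inl (mkPair i j h) : DIdx n) *
              FreeGroup.of (Sum.inr j : DIdx n) * FreeGroup.of (Sum.inr i : DIdx n) *
              (FreeGroup.of (Sum.inl (mkPair i j h) : DIdx n))⁻¹) ∨
       (∃ (i j k : Fin n) (h : i ≠ j), k ≠ i ∧ k ≠ j ∧
          r = FreeGroup.of (Sum.inl (mkPair i j h) : DIdx n) *
              FreeGroup.of (Sum.inr k : DIdx n) *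
              (FreeGroup.of (Sum.inl (mkPair i j h) : DIdx n))⁻¹ *
              (FreeGroup.of (Sum.inr k : DIdx n))⁻¹)}

/-- The group `G_{n,D}^2`. -/
abbrev GnD2 (n : ℕ) := PresentedGroup (gnD2Rels n)

/-- The generator `a_{ij}` of `G_{n,D}^2`. -/
def AD {n : ℕ} (i j : Fin n) (h : i ≠ j) : GnD2 n := PresentedGroup.of (Sum.inl (mkPair i j h))

/-- The generator `τ_i` of `G_{n,D}^2`. -/
def T {n : ℕ} (i : Fin n) : GnD2 n := PresentedGroup.of (Sum.inr i)

/-- The image of a word in `G_{n,P}^2`. -/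
def mkP (n : ℕ) (L : List ((PairIdx n × ZMod 2) × Bool)) : GnP2 n :=
  PresentedGroup.mk (gnP2Rels n) (FreeGroup.mk L)

/-- Index type for the generators of `F_n^2`: functions `{1,…,n} \ {i,j} → Z/2`. -/
abbrev Fn2Idx (n : ℕ) (i j : Fin n) := ({l : Fin n // l ≠ i ∧ l ≠ j}) → ZMod 2

/-- Relations of `F_n^2`: every generator is an involution, and nothing else. -/
def fn2Rels (n : ℕ) (i j : Fin n) : Set (FreeGroup (Fn2Idx n i j)) :=
  {r | ∃ σ : Fn2Idx n i j, r = FreeGroup.of σ * FreeGroup.of σ}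

/-- The group `F_n^2`, the free product of `2^{n-2}` copies of `Z/2`. -/
abbrev Fn2 (n : ℕ) (i j : Fin n) := PresentedGroup (fn2Rels n i j)

/-- The word-level map `w^P_{{i,j}}`: reading a word over the alphabet of `G_{n,P}^2` from
left to right, keeping the running parity `N (s, δ)` of the number of occurrences of each
letter `a_s^δ` seen so far, every occurrence `c` of a letter `a_{ij}^ε` contributes the
generator `i_c^P` of `F_n^2` given by `i_c^P(k) = N_{ik}^0 + N_{jk}^0` if `ε = 0` and
`i_c^P(k) = N_{ik}^0 + N_{jk}^1` if `ε = 1`. -/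
def wW (n : ℕ) (i j : Fin n) (hij : i ≠ j) :
    List ((PairIdx n × ZMod 2) × Bool) → ((PairIdx n × ZMod 2) → ZMod 2) → Fn2 n i j
  | [], _ => 1
  | (c, _) :: L, N =>
      (if c.1 = mkPair i j hij then
        PresentedGroup.of (fun k : {l : Fin n // l ≠ i ∧ l ≠ j} =>
          if c.2 = 0 then
            N (mkPair i k.1 (Ne.symm k.2.1), 0) + N (mkPair j k.1 (Ne.symm k.2.2), 0)
          else
            N (mkPair i k.1 (Ne.symm k.2.1), 0) + N (mkPair j k.1 (Ne.symm k.2.2), 1))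
      else 1) * wW n i j hij L (Function.update N c (N c + 1))

section Transducer

variable {α S H : Type*} [AddGroup S] [Group H] (δ : α → S) (e : α → S → H)

def transduce : List α → S → H
  | [], _ => 1
  | c :: L, N => e c N * transduce L (N + δ c)

/-- The state `N` sits at the point `ofAdd (-N)`, so that multiplying on the left by the image
of `c` moves it to `N + δ c`. -/
def transducerWreath (c : α) : H ≀ᵣ Multiplicative S :=
  ⟨fun x => e c (-x.toAdd), .ofAdd (δ c)⟩

lemma transducerWreath_list_prod_right (L : List α) :
    ((L.map (transducerWreath δ e)).prod).right = .ofAdd (L.map δ).sum := by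
  induction L with
  | nil => rfl
  | cons c L ih => simp [ih, transducerWreath]

lemma transducerWreath_list_prod_left (L : List α) (N : S) :
    ((L.map (transducerWreath δ e)).prod).left (.ofAdd (-N)) = transduce δ e L N := by
  induction L generalizing N with
  | nil => rfl
  | cons c L ih =>
    rw [List.map_cons, List.prod_cons, RegularWreathProduct.mul_left, transduce, ← ih]
    simp [transducerWreath, neg_add_rev]

lemma transducerWreath_list_prod_eq {L₁ L₂ : List α}
    (hδ : (L₁.map δ).sum = (L₂.map δ).sum)
    (he : ∀ N, transduce δ e L₁ N = transduce δ e L₂ N) :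
    (L₁.map (transducerWreath δ e)).prod = (L₂.map (transducerWreath δ e)).prod := by
  ext x
  · rw [← ofAdd_toAdd x, ← neg_neg x.toAdd, transducerWreath_list_prod_left,
      transducerWreath_list_prod_left, he]
  · rw [transducerWreath_list_prod_right, transducerWreath_list_prod_right, hδ]

lemma transduce_eq_of_mk_eq {R : Set (FreeGroup α)}
    (hinv : ∀ c, transducerWreath δ e c * transducerWreath δ e c = 1)
    (hR : ∀ r ∈ R, FreeGroup.lift (transducerWreath δ e) r = 1) {L₁ L₂ : List (α × Bool)}
    (h : PresentedGroup.mk R (FreeGroup.mk L₁) = PresentedGroup.mk R (FreeGroup.mk L₂))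
    (N : S) : transduce δ e (L₁.map Prod.fst) N = transduce δ e (L₂.map Prod.fst) N := by
  have toGroup_mk (L : List (α × Bool)) :
      PresentedGroup.toGroup hR (PresentedGroup.mk R (FreeGroup.mk L)) =
        ((L.map Prod.fst).map (transducerWreath δ e)).prod := by
    refine FreeGroup.lift_mk.trans (congrArg List.prod ?_)
    rw [List.map_map]
    refine List.map_congr_left fun ⟨c, b⟩ _ => ?_
    cases b
    · exact inv_eq_of_mul_eq_one_right (hinv c)
    · rfl
  rw [← transducerWreath_list_prod_left, ← transducerWreath_list_prod_left, ← toGroup_mk,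
    ← toGroup_mk, h]

end Transducer

lemma Pi.single_one_add_self_zmod_two {ι : Type*} [DecidableEq ι] (c : ι) :
    (Pi.single c 1 + Pi.single c 1 : ι → ZMod 2) = 0 := by
  rw [← Pi.single_add, CharTwo.add_self_eq_zero, Pi.single_zero]

namespace GnP2

variable {n : ℕ}

lemma mem_mkPair {a b x : Fin n} {h : a ≠ b} : x ∈ (mkPair a b h).1 ↔ x = a ∨ x = b := by
  simp [mkPair]

lemma mkPair_comm (a b : Fin n) (h : a ≠ b) : mkPair a b h = mkPair b a h.symm :=
  Subtype.ext (Finset.pair_comm a b)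

lemma mkPair_eq_mkPair_iff {a b c d : Fin n} {hab : a ≠ b} {hcd : c ≠ d} :
    mkPair a b hab = mkPair c d hcd ↔ (a = c ∧ b = d) ∨ (a = d ∧ b = c) := by
  rw [mkPair, mkPair, Subtype.mk.injEq, ← Finset.coe_inj, Finset.coe_pair, Finset.coe_pair,
    Set.pair_eq_pair_iff]

abbrev Letter (n : ℕ) := PairIdx n × ZMod 2

abbrev Parities (n : ℕ) := Letter n → ZMod 2

/-- The generator `i_c^P` of `F_n^2` output by the letter `c` in the parity state `N`; the
paper's two cases `ε = 0, 1` are the single formula `N_{ik}^0 + N_{jk}^ε`. -/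
def parityIndex (i j : Fin n) (hij : i ≠ j) (c : Letter n) (N : Parities n) : Fn2 n i j :=
  if c.1 = mkPair i j hij then
    PresentedGroup.of fun k : {l : Fin n // l ≠ i ∧ l ≠ j} =>
      N (mkPair i k.1 (Ne.symm k.2.1), 0) + N (mkPair j k.1 (Ne.symm k.2.2), c.2)
  else 1

variable {i j : Fin n} {hij : i ≠ j}

lemma wW_eq_transduce (L : List (Letter n × Bool)) (N : Parities n) :
    wW n i j hij L N = transduce (Pi.single · 1) (parityIndex i j hij) (L.map Prod.fst) N := by
  induction L generalizing N with
  | nil => rfl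
  | cons x L ih =>
    obtain ⟨⟨p, ε⟩, b⟩ := x
    have hupdate : Function.update N (p, ε) (N (p, ε) + 1) = N + Pi.single (p, ε) 1 := by
      ext x
      by_cases hx : x = (p, ε) <;> simp [hx, Function.update_of_ne]
    have zmod_two_cases : ∀ x : ZMod 2, x = 0 ∨ x = 1 := by decide
    rw [wW, ih, hupdate, List.map_cons, transduce, parityIndex]
    rcases zmod_two_cases ε with rfl | rfl <;> simp

lemma parityIndex_of_ne {c : Letter n} (hc : c.1 ≠ mkPair i j hij) (N : Parities n) :
    parityIndex i j hij c N = 1 :=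
  if_neg hc

lemma parityIndex_add_single_of_mem_iff (c d : Letter n) (hd : i ∈ d.1.1 ↔ j ∈ d.1.1)
    (N : Parities n) : parityIndex i j hij c (N + Pi.single d 1) = parityIndex i j hij c N := by
  unfold parityIndex
  split_ifs
  · refine congrArg _ (funext fun k => ?_)
    have hi : (mkPair i k.1 (Ne.symm k.2.1), (0 : ZMod 2)) ≠ d := by
      rintro rfl
      simp [mem_mkPair, hij.symm, k.2.2.symm] at hd
    have hj : (mkPair j k.1 (Ne.symm k.2.2), c.2) ≠ d := by
      rintro rfl
      simp [mem_mkPair, hij, k.2.1.symm] at hd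
    simp [hi, hj]
  · rfl

lemma parityIndex_add_single_add_single (u : Fin n) (hiu : i ≠ u) (hju : j ≠ u)
    (ε εi εj : ZMod 2) (hε : ε + εi + εj = 0) (N : Parities n) :
    parityIndex i j hij (mkPair i j hij, ε)
        (N + Pi.single (mkPair i u hiu, εi) 1 + Pi.single (mkPair j u hju, εj) 1) =
      parityIndex i j hij (mkPair i j hij, ε) N := by
  simp only [parityIndex, if_true]
  refine congrArg _ (funext fun k => ?_)
  simp only [Pi.add_apply, Pi.single_apply, Prod.mk.injEq, mkPair_eq_mkPair_iff]
  have hparity : (0 = εi) ↔ (ε = εj) := by revert ε εi εj; decide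
  simp only [hij, hiu, hju, hij.symm, hparity, false_and, or_false, if_false, add_zero, true_and]
  split_ifs
  · rw [add_add_add_comm, CharTwo.add_self_eq_zero, add_zero]
  · simp only [add_zero]

lemma parityIndex_triangle (s t u : Fin n) (hst : s ≠ t) (hsu : s ≠ u) (htu : t ≠ u)
    (ε₁ ε₂ ε₃ : ZMod 2) (hε : ε₁ + ε₂ + ε₃ = 0) (N : Parities n) :
    parityIndex i j hij (mkPair s t hst, ε₁)
        (N + Pi.single (mkPair s u hsu, ε₂) 1 + Pi.single (mkPair t u htu, ε₃) 1) =
      parityIndex i j hij (mkPair s t hst, ε₁) N := by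
  by_cases hc : mkPair s t hst = mkPair i j hij
  · rcases mkPair_eq_mkPair_iff.1 hc with ⟨rfl, rfl⟩ | ⟨rfl, rfl⟩
    · exact parityIndex_add_single_add_single u hsu htu ε₁ ε₂ ε₃ hε N
    · rw [hc, add_right_comm]
      exact parityIndex_add_single_add_single u htu hsu ε₁ ε₃ ε₂ (by rw [← hε]; ring) N
  · rw [parityIndex_of_ne hc, parityIndex_of_ne hc]

lemma transduce_parityIndex_pair_self (c : Letter n) (N : Parities n) :
    transduce (Pi.single · 1) (parityIndex i j hij) [c, c] N = 1 := by
  rw [transduce, transduce, transduce, mul_one]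
  by_cases hc : c.1 = mkPair i j hij
  · rw [parityIndex_add_single_of_mem_iff c c (by simp [hc, mem_mkPair]), parityIndex, if_pos hc]
    exact PresentedGroup.one_of_mem ⟨_, rfl⟩
  · rw [parityIndex_of_ne hc, parityIndex_of_ne hc, mul_one]

lemma transduce_parityIndex_comm (c d : Letter n) (hcd : Disjoint c.1.1 d.1.1) (N : Parities n) :
    transduce (Pi.single · 1) (parityIndex i j hij) [c, d] N =
      transduce (Pi.single · 1) (parityIndex i j hij) [d, c] N := by
  simp only [transduce, mul_one]
  by_cases hc : c.1 = mkPair i j hij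
  · have hi : i ∉ d.1.1 := hcd.notMem_of_mem_left_finset (by simp [hc, mem_mkPair])
    have hj : j ∉ d.1.1 := hcd.notMem_of_mem_left_finset (by simp [hc, mem_mkPair])
    have hd : d.1 ≠ mkPair i j hij := by rintro h; simp [h, mem_mkPair] at hi
    rw [parityIndex_of_ne hd, parityIndex_of_ne hd,
      parityIndex_add_single_of_mem_iff c d (iff_of_false hi hj), mul_one, one_mul]
  · by_cases hd : d.1 = mkPair i j hij
    · have hi : i ∉ c.1.1 := hcd.notMem_of_mem_right_finset (by simp [hd, mem_mkPair])
      have hj : j ∉ c.1.1 := hcd.notMem_of_mem_right_finset (by simp [hd, mem_mkPair])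
      rw [parityIndex_of_ne hc, parityIndex_of_ne hc,
        parityIndex_add_single_of_mem_iff d c (iff_of_false hi hj), mul_one, one_mul]
    · simp only [parityIndex_of_ne hc, parityIndex_of_ne hd]

lemma transduce_parityIndex_triangle (s t u : Fin n) (hst : s ≠ t) (hsu : s ≠ u) (htu : t ≠ u)
    (ε₁ ε₂ ε₃ : ZMod 2) (hε : ε₁ + ε₂ + ε₃ = 0) (N : Parities n) :
    transduce (Pi.single · 1) (parityIndex i j hij)
        [(mkPair s t hst, ε₁), (mkPair s u hsu, ε₂), (mkPair t u htu, ε₃)] N =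
      transduce (Pi.single · 1) (parityIndex i j hij)
        [(mkPair t u htu, ε₃), (mkPair s u hsu, ε₂), (mkPair s t hst, ε₁)] N := by
  simp only [transduce, mul_one]
  by_cases hA : mkPair s t hst = mkPair i j hij
  · have hB : mkPair s u hsu ≠ mkPair i j hij := by
      simp [← hA, mkPair_eq_mkPair_iff, hst, htu.symm]
    have hC : mkPair t u htu ≠ mkPair i j hij := by
      simp [← hA, mkPair_eq_mkPair_iff, hst.symm, hsu.symm, htu.symm]
    simp only [parityIndex_of_ne, ne_eq, hB, hC, not_false_eq_true, mul_one, one_mul]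
    rw [add_right_comm, parityIndex_triangle s t u hst hsu htu ε₁ ε₂ ε₃ hε]
  by_cases hB : mkPair s u hsu = mkPair i j hij
  · have hC : mkPair t u htu ≠ mkPair i j hij := by
      simp [← hB, mkPair_eq_mkPair_iff, hst.symm, hsu.symm, htu]
    simp only [parityIndex_of_ne, ne_eq, hA, hC, not_false_eq_true, mul_one, one_mul]
    have h := parityIndex_triangle (hij := hij) s u t hsu hst htu.symm ε₂ ε₁ ε₃
      (by rw [← hε]; ring) (N + Pi.single (mkPair t u htu, ε₃) 1)
    rwa [mkPair_comm u t, add_right_comm _ (Pi.single _ 1), add_assoc N,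
      Pi.single_one_add_self_zmod_two, add_zero] at h
  by_cases hC : mkPair t u htu = mkPair i j hij
  · simp only [parityIndex_of_ne, ne_eq, hA, hB, not_false_eq_true, mul_one, one_mul]
    have h := parityIndex_triangle (hij := hij) t u s htu hst.symm hsu.symm ε₃ ε₁ ε₂
      (by rw [← hε]; ring) N
    rwa [mkPair_comm t s, mkPair_comm u s] at h
  simp only [parityIndex_of_ne, ne_eq, hA, hB, hC, not_false_eq_true]

lemma transducerWreath_parityIndex_mul_self (c : Letter n) :
    transducerWreath (Pi.single · 1) (parityIndex i j hij) c *
      transducerWreath (Pi.single · 1) (parityIndex i j hij) c = 1 := by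
  simpa using transducerWreath_list_prod_eq (Pi.single · 1) (parityIndex i j hij)
    (L₁ := [c, c]) (L₂ := []) (by simpa using Pi.single_one_add_self_zmod_two c)
    (transduce_parityIndex_pair_self c)

lemma lift_transducerWreath_parityIndex_of_mem_gnP2Rels :
    ∀ r ∈ gnP2Rels n,
      FreeGroup.lift (transducerWreath (Pi.single · 1) (parityIndex i j hij)) r = 1 := by
  rintro r (⟨a, b, hab, ε, rfl⟩ |
    ⟨a, b, c, d, hab, hcd, ε₁, ε₂, hac, had, hbc, hbd, rfl⟩ |
    ⟨s, t, u, hst, hsu, htu, ε₁, ε₂, ε₃, hε, rfl⟩)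
  · simpa using transducerWreath_parityIndex_mul_self _
  · simp only [map_mul, map_inv, FreeGroup.lift_apply_of, mul_inv_eq_iff_eq_mul]
    simpa using transducerWreath_list_prod_eq (Pi.single · 1) (parityIndex i j hij)
      (L₁ := [(mkPair a b hab, ε₁), (mkPair c d hcd, ε₂)])
      (L₂ := [(mkPair c d hcd, ε₂), (mkPair a b hab, ε₁)]) (by simp [add_comm])
      (transduce_parityIndex_comm _ _ (by simp [mkPair, hac.symm, had.symm, hbc.symm, hbd.symm]))
  · simp only [map_mul, map_inv, FreeGroup.lift_apply_of, mul_inv_eq_one]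
    simpa [mul_assoc] using transducerWreath_list_prod_eq (Pi.single · 1) (parityIndex i j hij)
      (L₁ := [(mkPair s t hst, ε₁), (mkPair s u hsu, ε₂), (mkPair t u htu, ε₃)])
      (L₂ := [(mkPair t u htu, ε₃), (mkPair s u hsu, ε₂), (mkPair s t hst, ε₁)])
      (by simp only [List.map_cons, List.map_nil, List.sum_cons, List.sum_nil]; abel)
      (transduce_parityIndex_triangle s t u hst hsu htu ε₁ ε₂ ε₃ hε)

end GnP2

theorem stmt19_general (n : ℕ) (i j : Fin n) (hij : i < j)
    (L₁ L₂ : List ((PairIdx n × ZMod 2) × Bool))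
    (h : mkP n L₁ = mkP n L₂) :
    wW n i j hij.ne L₁ (fun _ => 0) = wW n i j hij.ne L₂ (fun _ => 0) := by
  rw [GnP2.wW_eq_transduce, GnP2.wW_eq_transduce]
  exact transduce_eq_of_mk_eq _ _ GnP2.transducerWreath_parityIndex_mul_self
    GnP2.lift_transducerWreath_parityIndex_of_mem_gnP2Rels h _

/-- `w^P_{{i,j}} : G_{n,P}^2 → F_n^2` is well defined: its value on a word
depends only on the element of `G_{n,P}^2` the word represents. -/
theorem stmt19 (n : ℕ) (hn : 2 < n) (i j : Fin n) (hij : i < j)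
    (L₁ L₂ : List ((PairIdx n × ZMod 2) × Bool))
    (h : mkP n L₁ = mkP n L₂) :
    wW n i j hij.ne L₁ (fun _ => 0) = wW n i j hij.ne L₂ (fun _ => 0) :=
  stmt19_general n i j hij L₁ L₂ h
end
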